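/- For n ≥ 1, the number of even 321-avoiding permutations in S_{2n} equals the number of odd 321-avoiding permutations in S_{2n}; equivalently, the sum of (-1)^{inv(π)} over 321-avoiding π in S_{2n} is 0. -/

import Mathlib

open Finset

/-- A permutation is 321-avoiding if it has no decreasing subsequence of length 3. -/
def Avoids321 {n : ℕ} (π : Equiv.Perm (Fin n)) : Prop :=
  ¬ ∃ i j k : Fin n, i < j ∧ j < k ∧ π k < π j ∧ π j < π i

instance {n : ℕ} : DecidablePred (Avoids321 (n := n)) := fun π =>
  decidable_of_iff (¬ ∃ i j k : Fin n, i < j ∧ j < k ∧ π k < π j ∧ π j < π i) Iff.rfl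

/-- The set `T_n` of 321-avoiding permutations of order `n`. -/
def Tset (n : ℕ) : Finset (Equiv.Perm (Fin n)) :=
  Finset.univ.filter (fun π => Avoids321 π)

/-- The value `π(i)` in one-based notation: positions `1,…,n`, values `1,…,n`. -/
def pval {n : ℕ} (π : Equiv.Perm (Fin n)) (i : ℕ) : ℕ :=
  if h : i - 1 < n then (π ⟨i - 1, h⟩ : ℕ) + 1 else 0

/-- The descent set `Des(π) = {1 ≤ i ≤ n-1 : π(i) > π(i+1)}` (one-based). -/
def desSet {n : ℕ} (π : Equiv.Perm (Fin n)) : Finset ℕ :=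
  (Finset.Icc 1 (n - 1)).filter (fun i => pval π (i + 1) < pval π i)

/-- The last descent of `π` (0 for the identity). -/
def ldes {n : ℕ} (π : Equiv.Perm (Fin n)) : ℕ := (desSet π).sup id

/-- `lind(π) = π⁻¹(n)`, the (one-based) position of the letter `n` in `π`. -/
def lind {n : ℕ} (π : Equiv.Perm (Fin n)) : ℕ := pval π.symm n

/-- The inversion number of `π`. -/
def invNum {n : ℕ} (π : Equiv.Perm (Fin n)) : ℕ :=
  (Finset.univ.filter (fun q : Fin n × Fin n => q.1 < q.2 ∧ π q.2 < π q.1)).card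

/-- A ±1 sequence of length `2n` (`true` = +1) is a Dyck path if it has `n` up
steps and every prefix has at least as many up steps as down steps. -/
def IsDyckPred (n : ℕ) (p : Fin (2 * n) → Bool) : Prop :=
  (Finset.univ.filter (fun i => p i = true)).card = n ∧
  ∀ k ≤ 2 * n,
    k ≤ 2 * (Finset.univ.filter (fun i : Fin (2 * n) => (i : ℕ) < k ∧ p i = true)).card

instance (n : ℕ) : DecidablePred (IsDyckPred n) := fun p => by
  unfold IsDyckPred; infer_instance

/-- The set `P_n` of Dyck paths of length `2n`. -/
def DyckPath (n : ℕ) : Type := { p : Fin (2 * n) → Bool // IsDyckPred n p }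

instance (n : ℕ) : Fintype (DyckPath n) := by unfold DyckPath; infer_instance

/-- The `i`-th step of the path, one-based; `true` = +1, `false` = -1. -/
def pstep {n : ℕ} (p : DyckPath n) (i : ℕ) : Bool :=
  if h : i - 1 < 2 * n then p.1 ⟨i - 1, h⟩ else false

/-- `Des(p) = {1 ≤ i ≤ n-1 : p_i = +1, p_{i+1} = -1}`. -/
def pathDes {n : ℕ} (p : DyckPath n) : Finset ℕ :=
  (Finset.Icc 1 (n - 1)).filter (fun i => pstep p i = true ∧ pstep p (i + 1) = false)

/-- `Des(p⁻¹) = {1 ≤ i ≤ n-1 : p_{2n-i} = +1, p_{2n-i+1} = -1}`. -/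
def pathDesInv {n : ℕ} (p : DyckPath n) : Finset ℕ :=
  (Finset.Icc 1 (n - 1)).filter
    (fun i => pstep p (2 * n - i) = true ∧ pstep p (2 * n - i + 1) = false)

/-- `ldes(p) = max{1 ≤ i ≤ n-1 : p_i = +1, p_{i+1} = -1}` (0 if none). -/
def pathLdes {n : ℕ} (p : DyckPath n) : ℕ := (pathDes p).sup id

/-- `lind(p) = max{1 ≤ i ≤ n : p_i = +1, p_{i+1} = -1}` (0 if none). -/
def pathLind {n : ℕ} (p : DyckPath n) : ℕ :=
  ((Finset.Icc 1 n).filter (fun i => pstep p i = true ∧ pstep p (i + 1) = false)).sup id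

/-- `tail(p) = 2n - max{i : p_i = +1, p_{i+1} = -1}`, the number of consecutive
down steps at the end of `p`. -/
def pathTail {n : ℕ} (p : DyckPath n) : ℕ :=
  2 * n -
    ((Finset.Icc 1 (2 * n - 1)).filter
      (fun i => pstep p i = true ∧ pstep p (i + 1) = false)).sup id

/-!
Inserting the largest letter into `σ ∈ T_m` at position `p` (`σ.insertMax p`) gives a
321-avoiding permutation iff `p ≥ ldes σ`; it adds `m - p` inversions, and the last descent
becomes `p + 1`, except for `p = m`, where it stays `ldes σ`. Hence the signed distribution
`a_N(e) = ∑_{π ∈ T_N, ldes π = e} (-1)^inv(π)` obeys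
`a_{m+1}(e) = a_m(e) + (-1)^(m+1-e) ∑_{i<e} a_m(i)` for `e ≤ m`.
For odd `m` this recursion makes `a_{m+1}(2j) + a_{m+1}(2j+1) = 0` as soon as `a_m` vanishes at
odd arguments, and then `a_{m+2}` vanishes at odd arguments again. As `a_1` does, every
`a_{2k+1}` does, and the signed sum over `T_{2k+2}`, a sum of such pairs, is zero.
-/

open Equiv

variable {m : ℕ}

lemma sum_neg_one_pow_eq_card_sub_card {α : Type*} (s : Finset α) (f : α → ℕ) :
    ∑ x ∈ s, (-1 : ℤ) ^ f x = #{x ∈ s | Even (f x)} - #{x ∈ s | Odd (f x)} := by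
  rw [← sum_filter_add_sum_filter_not s (fun x => Even (f x))]
  simp only [Nat.not_even_iff_odd]
  rw [sum_eq_card_nsmul fun x hx => (mem_filter.1 hx).2.neg_one_pow,
    sum_eq_card_nsmul fun x hx => (mem_filter.1 hx).2.neg_one_pow]
  simp [sub_eq_add_neg]

lemma Fin.strictMonoOn_of_lt_add_one {α : Type*} [Preorder α] {f : Fin m → α} {t : ℕ}
    (h : ∀ (k : Fin m) (hk : (k : ℕ) + 1 < m), t ≤ k → f k < f ⟨k + 1, hk⟩) :
    StrictMonoOn f {k | t ≤ (k : ℕ)} := by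
  rintro k (hk : t ≤ (k : ℕ)) ⟨l, hl⟩ - hkl
  induction l with
  | zero => exact absurd (Fin.lt_def.1 hkl) (Nat.not_lt_zero _)
  | succ l ih =>
    rcases Nat.lt_succ_iff_lt_or_eq.1 (Fin.lt_def.1 hkl) with hkl | hkl
    · exact (ih (by omega) hkl).trans (h ⟨l, by omega⟩ hl (show t ≤ l by omega))
    · convert h k (by omega) hk
      exact hkl.symm

lemma Fin.card_filter_lt_succAbove (p : Fin (m + 1)) :
    #{k : Fin m | p < p.succAbove k} = m - p := by
  have h := Fin.sum_univ_succAbove (fun j => if p < j then 1 else 0) p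
  simp only [lt_self_iff_false, if_false, zero_add, ← card_filter] at h
  rw [← h, Finset.filter_lt_eq_Ioi, Fin.card_Ioi]
  omega

lemma mem_desSet {σ : Perm (Fin m)} {i : ℕ} :
    i ∈ desSet σ ↔
      ∃ (k : Fin m) (hk : (k : ℕ) + 1 < m), (k : ℕ) + 1 = i ∧ σ ⟨k + 1, hk⟩ < σ k := by
  rw [desSet, Finset.mem_filter, Finset.mem_Icc]
  constructor
  · rintro ⟨⟨h1, h2⟩, h3⟩
    refine ⟨⟨i - 1, by omega⟩, show i - 1 + 1 < m by omega, show i - 1 + 1 = i by omega, ?_⟩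
    simp only [pval] at h3 ⊢
    rw [dif_pos (by omega), dif_pos (by omega)] at h3
    simp only [Nat.add_sub_cancel, Nat.sub_add_cancel h1, add_lt_add_iff_right] at h3 ⊢
    exact h3
  · rintro ⟨k, hk, rfl, h⟩
    refine ⟨by omega, ?_⟩
    simp only [pval]
    rw [dif_pos (by omega), dif_pos (by omega)]
    simp only [Nat.add_sub_cancel, add_lt_add_iff_right]
    exact h

lemma ldes_le_iff_strictMonoOn {σ : Perm (Fin m)} {t : ℕ} :
    ldes σ ≤ t ↔ StrictMonoOn σ {k | t ≤ (k : ℕ)} := by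
  simp only [ldes, Finset.sup_le_iff, id, mem_desSet]
  constructor
  · intro h
    refine Fin.strictMonoOn_of_lt_add_one fun k hk htk => ?_
    refine (le_of_not_gt fun hlt => ?_).lt_of_ne (σ.injective.ne ?_)
    · have := h _ ⟨k, hk, rfl, hlt⟩
      omega
    · simp [Fin.ext_iff]
  · rintro h _ ⟨k, hk, rfl, hlt⟩
    by_contra! htk
    exact hlt.not_gt (h (show t ≤ k by omega) (show t ≤ k + 1 by omega) (Nat.lt_succ_self k))

lemma ldes_le_pred (σ : Perm (Fin m)) : ldes σ ≤ m - 1 :=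
  Finset.sup_le fun _ hi => (Finset.mem_Icc.1 (Finset.mem_filter.1 hi).1).2

namespace Equiv.Perm

def insertMax (σ : Perm (Fin m)) (p : Fin (m + 1)) : Perm (Fin (m + 1)) :=
  (finSuccEquiv' p).trans (σ.optionCongr.trans (finSuccEquiv' (Fin.last m)).symm)

def eraseMax (π : Perm (Fin (m + 1))) : Perm (Fin m) :=
  removeNone ((finSuccEquiv' (π.symm (Fin.last m))).symm.trans
    (π.trans (finSuccEquiv' (Fin.last m))))

variable (σ : Perm (Fin m)) (p : Fin (m + 1))

@[simp]
lemma insertMax_apply_self : σ.insertMax p p = Fin.last m := by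
  simp [insertMax]

@[simp]
lemma insertMax_apply_succAbove (k : Fin m) :
    σ.insertMax p (p.succAbove k) = (σ k).castSucc := by
  simp [insertMax, Fin.succAbove_last]

@[simp]
lemma insertMax_last_apply_castSucc (k : Fin m) :
    σ.insertMax (Fin.last m) k.castSucc = (σ k).castSucc := by
  rw [← Fin.succAbove_last_apply, insertMax_apply_succAbove]

lemma insertMax_symm_last : (σ.insertMax p).symm (Fin.last m) = p := by
  rw [symm_apply_eq, insertMax_apply_self]

lemma eraseMax_insertMax : (σ.insertMax p).eraseMax = σ := by
  have : (finSuccEquiv' p).symm.trans ((σ.insertMax p).trans (finSuccEquiv' (Fin.last m))) =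
      σ.optionCongr := by ext1 x; simp [insertMax]
  rw [eraseMax, insertMax_symm_last, this, removeNone_optionCongr]

lemma insertMax_eraseMax (π : Perm (Fin (m + 1))) :
    π.eraseMax.insertMax (π.symm (Fin.last m)) = π := by
  ext1 i
  simp [insertMax, eraseMax]

def insertMaxEquiv : Perm (Fin m) × Fin (m + 1) ≃ Perm (Fin (m + 1)) where
  toFun x := x.1.insertMax x.2
  invFun π := (π.eraseMax, π.symm (Fin.last m))
  left_inv x := by simp [eraseMax_insertMax, insertMax_symm_last]
  right_inv := insertMax_eraseMax

lemma invNum_insertMax : invNum (σ.insertMax p) = invNum σ + (m - p) := by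
  simp only [invNum, card_filter, Fintype.sum_prod_type]
  rw [Fin.sum_univ_succAbove _ p]
  simp only [insertMax_apply_self, insertMax_apply_succAbove, Fin.sum_univ_succAbove _ p,
    lt_self_iff_false, (Fin.castSucc_lt_last _).not_gt, Fin.castSucc_lt_last, and_self, and_true,
    and_false, if_false, zero_add, sum_boole, Fin.card_filter_lt_succAbove, Nat.cast_id,
    Fin.succAbove_lt_succAbove_iff, Fin.castSucc_lt_castSucc_iff]
  exact add_comm _ _

lemma insertMax_castSucc_apply_succ {q k : Fin m} (h : q ≤ k) :
    σ.insertMax q.castSucc k.succ = (σ k).castSucc := by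
  rw [← Fin.succAbove_castSucc_of_le q k h, insertMax_apply_succAbove]

lemma avoids321_insertMax_iff :
    Avoids321 (σ.insertMax p) ↔ Avoids321 σ ∧ ldes σ ≤ p := by
  rw [ldes_le_iff_strictMonoOn]
  constructor
  · intro h
    constructor
    · rintro ⟨i, j, k, hij, hjk, h1, h2⟩
      exact h ⟨p.succAbove i, p.succAbove j, p.succAbove k, by simpa, by simpa, by simpa, by simpa⟩
    · intro k (hk : (p : ℕ) ≤ k) l _ hkl
      by_contra hc
      have hlk : σ l < σ k := (not_lt.1 hc).lt_of_ne (σ.injective.ne hkl.ne')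
      refine h ⟨p, p.succAbove k, p.succAbove l, ?_, by simpa, by simpa,
        by simp [Fin.castSucc_lt_last]⟩
      exact (Fin.lt_succAbove_iff_le_castSucc _ _).2 (by simpa [Fin.le_def] using hk)
  · rintro ⟨hσ, hmono⟩ ⟨i, j, k, hij, hjk, h1, h2⟩
    have hj : j ≠ p := by rintro rfl; simp_all [(Fin.le_last _).not_gt]
    have hk : k ≠ p := by rintro rfl; simp_all [(Fin.le_last _).not_gt]
    obtain ⟨j, rfl⟩ := Fin.exists_succAbove_eq hj
    obtain ⟨k, rfl⟩ := Fin.exists_succAbove_eq hk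
    rcases eq_or_ne i p with rfl | hi
    · have hpj : (i : ℕ) ≤ j := by
        simpa [Fin.le_def] using (Fin.lt_succAbove_iff_le_castSucc _ _).1 hij
      have := hmono hpj (hpj.trans (Fin.succAbove_lt_succAbove_iff.1 hjk).le) (by simpa using hjk)
      simp only [insertMax_apply_succAbove, Fin.castSucc_lt_castSucc_iff] at h1
      exact this.not_gt h1
    · obtain ⟨i, rfl⟩ := Fin.exists_succAbove_eq hi
      exact hσ ⟨i, j, k, by simpa using hij, by simpa using hjk, by simpa using h1,
        by simpa using h2⟩

lemma ldes_insertMax_last : ldes (σ.insertMax (Fin.last m)) = ldes σ := by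
  refine eq_of_forall_ge_iff fun t => ?_
  simp only [ldes_le_iff_strictMonoOn]
  constructor
  · intro h k hk l hl hkl
    simpa using h (a := k.castSucc) (b := l.castSucc) hk hl (by simpa using hkl)
  · intro h k hk l hl hkl
    obtain ⟨k, rfl⟩ := Fin.exists_castSucc_eq.2 (Fin.ne_last_of_lt hkl)
    induction l using Fin.lastCases with
    | last => simp [Fin.castSucc_lt_last]
    | cast l => simpa using h hk hl (by simpa using hkl)

lemma ldes_insertMax_castSucc (q : Fin m) (hq : ldes σ ≤ q) :
    ldes (σ.insertMax q.castSucc) = q + 1 := by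
  rw [ldes_le_iff_strictMonoOn] at hq
  refine le_antisymm (ldes_le_iff_strictMonoOn.2 ?_)
    (Nat.succ_le_of_lt (lt_of_not_ge fun h => ?_))
  · rintro k (hk : (q : ℕ) + 1 ≤ k) l (hl : (q : ℕ) + 1 ≤ l) hkl
    obtain ⟨k, rfl⟩ := Fin.exists_succ_eq.2 (show k ≠ 0 by rintro rfl; simp at hk)
    obtain ⟨l, rfl⟩ := Fin.exists_succ_eq.2 (show l ≠ 0 by rintro rfl; simp at hl)
    simp only [Fin.val_succ, add_le_add_iff_right] at hk hl
    rw [insertMax_castSucc_apply_succ σ (Fin.le_def.2 hk),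
      insertMax_castSucc_apply_succ σ (Fin.le_def.2 hl)]
    exact Fin.castSucc_lt_castSucc_iff.2 (hq hk hl (Fin.succ_lt_succ_iff.1 hkl))
  · have := (ldes_le_iff_strictMonoOn.1 h) (a := q.castSucc) (b := q.succ) (by simp) (by simp)
      Fin.castSucc_lt_succ
    rw [insertMax_apply_self, insertMax_castSucc_apply_succ σ le_rfl] at this
    exact (Fin.castSucc_lt_last _).not_gt this

end Equiv.Perm

open Equiv.Perm

lemma sum_Tset_succ {M : Type*} [AddCommMonoid M] (F : Perm (Fin (m + 1)) → M) :
    ∑ π ∈ Tset (m + 1), F π =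
      ∑ σ ∈ Tset m, ∑ p ∈ univ.filter (fun p : Fin (m + 1) => ldes σ ≤ p),
        F (σ.insertMax p) := by
  simp only [Tset, sum_filter]
  rw [← insertMaxEquiv.sum_comp, Fintype.sum_prod_type]
  simp [insertMaxEquiv, avoids321_insertMax_iff, ite_and]

lemma sum_insertMax_ldes_eq (σ : Perm (Fin m)) (e : ℕ) :
    ∑ p ∈ univ.filter (fun p : Fin (m + 1) => ldes σ ≤ p),
        (if ldes (σ.insertMax p) = e then (-1 : ℤ) ^ (m - p) else 0) =
      (if ldes σ = e then 1 else 0) + if ldes σ < e ∧ e ≤ m then (-1) ^ (m + 1 - e) else 0 := by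
  have hσ : ldes σ ≤ m := (ldes_le_pred σ).trans (Nat.sub_le m 1)
  rw [sum_filter, Fin.sum_univ_castSucc, add_comm]
  simp only [Fin.val_castSucc, Fin.val_last, ldes_insertMax_last, hσ, if_true, Nat.sub_self,
    pow_zero]
  congr 1
  split_ifs with he
  · have hq : ldes σ ≤ e - 1 := by omega
    rw [Fintype.sum_eq_single ⟨e - 1, by omega⟩ fun q hq => ?_]
    · rw [if_pos hq, ldes_insertMax_castSucc σ _ hq, if_pos (show e - 1 + 1 = e by omega)]
      exact congrArg _ (show m - (e - 1) = m + 1 - e by omega)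
    · split_ifs with h1 h2
      · have := ldes_insertMax_castSucc σ q h1
        exact absurd (Fin.ext (show (q : ℕ) = e - 1 by omega)) hq
      all_goals rfl
  · refine sum_eq_zero fun q _ => ?_
    split_ifs with h1 h2
    · have := ldes_insertMax_castSucc σ q h1
      omega
    all_goals rfl

def ldesSignSum (N e : ℕ) : ℤ :=
  ∑ π ∈ Tset N with ldes π = e, (-1) ^ invNum π

def signStep (m : ℕ) (a : ℕ → ℤ) (e : ℕ) : ℤ :=
  a e + if e ≤ m then (-1) ^ (m + 1 - e) * ∑ i ∈ range e, a i else 0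

lemma sum_range_ldesSignSum (m e : ℕ) :
    ∑ i ∈ range e, ldesSignSum m i = ∑ σ ∈ Tset m with ldes σ < e, (-1) ^ invNum σ := by
  simp only [ldesSignSum, sum_filter]
  rw [sum_comm]
  simp [sum_ite_eq]

lemma ldesSignSum_succ (m : ℕ) : ldesSignSum (m + 1) = signStep m (ldesSignSum m) := by
  funext e
  have hσ : ∀ σ : Perm (Fin m),
      ∑ p ∈ univ.filter (fun p : Fin (m + 1) => ldes σ ≤ p),
        (if ldes (σ.insertMax p) = e then (-1 : ℤ) ^ invNum (σ.insertMax p) else 0) =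
      (-1) ^ invNum σ * ((if ldes σ = e then 1 else 0) +
        if ldes σ < e ∧ e ≤ m then (-1) ^ (m + 1 - e) else 0) := by
    intro σ
    rw [← sum_insertMax_ldes_eq, mul_sum]
    refine sum_congr rfl fun p _ => ?_
    rw [invNum_insertMax, pow_add, mul_ite, mul_zero]
  rw [ldesSignSum, sum_filter, sum_Tset_succ, sum_congr rfl fun σ _ => hσ σ, signStep,
    sum_range_ldesSignSum, ldesSignSum, sum_filter]
  simp only [mul_add, sum_add_distrib, mul_ite, mul_one, mul_zero]
  split_ifs with he
  · simp [he, sum_filter, mul_sum, mul_comm]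
  · simp [he]

section
variable {n : ℕ} {a : ℕ → ℤ}

lemma signStep_add_signStep_succ {j : ℕ} (ha : a (2 * j + 1) = 0) (hj : j ≤ n) :
    signStep (2 * n + 1) a (2 * j) + signStep (2 * n + 1) a (2 * j + 1) = 0 := by
  rw [signStep, signStep, if_pos (by omega), if_pos (by omega), sum_range_succ, ha,
    Even.neg_one_pow ⟨n + 1 - j, by omega⟩, Odd.neg_one_pow ⟨n - j, by omega⟩]
  ring

lemma sum_range_signStep (ha : ∀ j, a (2 * j + 1) = 0) {j : ℕ} (hj : j ≤ n + 1) :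
    ∑ i ∈ range (2 * j), signStep (2 * n + 1) a i = 0 := by
  induction j with
  | zero => simp
  | succ j ih =>
    rw [show 2 * (j + 1) = 2 * j + 1 + 1 by ring, sum_range_succ, sum_range_succ, add_assoc,
      ih (by omega), signStep_add_signStep_succ (ha j) (by omega), add_zero]

lemma signStep_signStep_odd (ha : ∀ j, a (2 * j + 1) = 0) (j : ℕ) :
    signStep (2 * n + 1 + 1) (signStep (2 * n + 1) a) (2 * j + 1) = 0 := by
  rw [signStep]
  by_cases hj : j ≤ n
  · rw [if_pos (by omega), sum_range_succ, sum_range_signStep ha (by omega),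
      Even.neg_one_pow ⟨n + 1 - j, by omega⟩, zero_add, one_mul, add_comm,
      signStep_add_signStep_succ (ha j) hj]
  · rw [if_neg (by omega), add_zero, signStep, if_neg (by omega), add_zero, ha]

end

lemma ldesSignSum_odd (n j : ℕ) : ldesSignSum (2 * n + 1) (2 * j + 1) = 0 := by
  induction n generalizing j with
  | zero =>
    refine sum_eq_zero fun π hπ => absurd (mem_filter.1 hπ).2 ?_
    have := ldes_le_pred π
    omega
  | succ n ih =>
    rw [show 2 * (n + 1) + 1 = 2 * n + 1 + 1 + 1 by ring, ldesSignSum_succ, ldesSignSum_succ]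
    exact signStep_signStep_odd ih j

lemma sum_Tset_succ_neg_one_pow (m : ℕ) :
    ∑ π ∈ Tset (m + 1), (-1 : ℤ) ^ invNum π = ∑ e ∈ range (m + 1), ldesSignSum (m + 1) e :=
  (sum_fiberwise_of_maps_to (g := ldes) (t := range (m + 1))
    (fun π _ => mem_range.2 (by have := ldes_le_pred π; omega)) _).symm

theorem sign_balance_even (n : ℕ) (hn : 1 ≤ n) :
    ((Tset (2 * n)).filter (fun π => Even (invNum π))).card =
        ((Tset (2 * n)).filter (fun π => Odd (invNum π))).card ∧
      ∑ π ∈ Tset (2 * n), (-1 : ℤ) ^ invNum π = 0 := by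
  obtain ⟨k, rfl⟩ : ∃ k, n = k + 1 := ⟨n - 1, by omega⟩
  have hsum : ∑ π ∈ Tset (2 * (k + 1)), (-1 : ℤ) ^ invNum π = 0 := by
    rw [show 2 * (k + 1) = 2 * k + 1 + 1 by ring, sum_Tset_succ_neg_one_pow, ldesSignSum_succ,
      show 2 * k + 1 + 1 = 2 * (k + 1) by ring]
    exact sum_range_signStep (ldesSignSum_odd k) le_rfl
  refine ⟨?_, hsum⟩
  have := sum_neg_one_pow_eq_card_sub_card (Tset (2 * (k + 1))) invNum
  omega
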